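/- arXiv:2004.06255 — 6 statements merged into one kernel-verified Lean document; each statement's English description precedes it below -/
import Mathlib

section
/- Let h : ℝⁿ → ℝ be given by h(x) = min over C in a finite nonempty family E of nonempty convex compact subsets of ℝ × ℝⁿ of max over (a,v) in C of (a + ⟨v,x⟩), with h(0) = 0. Then h(x) ≥ 0 for all x ∈ ℝⁿ if and only if every C ∈ E contains a point of the form (a, 0) with a ≥ 0. -/
/-!
If some `C j` misses the ray `{(a, 0) : a ≥ 0}`, strict separation of the compact convex `C j`
from the closed convex ray gives a functional `(a, v) ↦ s a + ⟪w, v⟫` that is negative on `C j`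
and, since it is bounded below on the ray, has `s ≥ 0`. Adding a small multiple of `a` makes `s > 0` and keeps it negative on the
compact `C j`; dividing by `s` then yields an `x` with `a + ⟪v, x⟫ < 0` on all of `C j`,
hence `h x < 0`.
Conversely a point `(a, 0)` with `a ≥ 0` in every `C j` makes each maximum, hence `h`, nonnegative.
-/

open scoped RealInnerProductSpace

/-- The ray `L₀⁺`. -/
def nonnegRay (E : Type*) [Zero E] : Set (ℝ × E) :=
  {p | 0 ≤ p.1 ∧ p.2 = 0}

section

variable {E : Type*} [NormedAddCommGroup E] [InnerProductSpace ℝ E]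

noncomputable def maxAffine (C : Set (ℝ × E)) (x : E) : ℝ :=
  sSup ((fun p : ℝ × E => p.1 + ⟪p.2, x⟫) '' C)

theorem convex_nonnegRay : Convex ℝ (nonnegRay E) := by
  rintro p ⟨hp₁, hp₂⟩ q ⟨hq₁, hq₂⟩ a b ha hb -
  refine ⟨?_, by simp [hp₂, hq₂]⟩
  simpa using add_nonneg (mul_nonneg ha hp₁) (mul_nonneg hb hq₁)

omit [InnerProductSpace ℝ E] in
theorem isClosed_nonnegRay : IsClosed (nonnegRay E) :=
  (isClosed_le continuous_const continuous_fst).inter (isClosed_eq continuous_snd continuous_const)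

theorem exists_eq_mul_fst_add_inner [CompleteSpace E] (f : ℝ × E →L[ℝ] ℝ) :
    ∃ (s : ℝ) (w : E), ∀ p : ℝ × E, f p = s * p.1 + ⟪w, p.2⟫ := by
  refine ⟨f (1, 0), (InnerProductSpace.toDual ℝ E).symm (f.comp (.inr ℝ ℝ E)), fun p => ?_⟩
  have hfst : f (p.1, 0) = f (1, 0) * p.1 := by
    rw [mul_comm, ← smul_eq_mul, ← map_smul, Prod.smul_mk, smul_zero, smul_eq_mul, mul_one]
  rw [InnerProductSpace.toDual_symm_apply, ← f.comp_inl_add_comp_inr p]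
  simp [hfst]

theorem exists_forall_fst_add_inner_neg [CompleteSpace E] {C : Set (ℝ × E)} (hconv : Convex ℝ C)
    (hcomp : IsCompact C) (hdisj : Disjoint C (nonnegRay E)) :
    ∃ x : E, ∀ p ∈ C, p.1 + ⟪p.2, x⟫ < 0 := by
  obtain ⟨f, u, v, hfu, huv, hfv⟩ := geometric_hahn_banach_compact_closed hconv hcomp
    convex_nonnegRay isClosed_nonnegRay hdisj
  obtain ⟨s, w, hf⟩ := exists_eq_mul_fst_add_inner f
  have hv : v < 0 := by simpa using hfv 0 ⟨le_rfl, rfl⟩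
  have hs : 0 ≤ s := by
    by_contra! hs
    have := hfv ((v - 1) / s, 0) ⟨div_nonneg_of_nonpos (by linarith) hs.le, rfl⟩
    rw [hf, mul_div_cancel₀ _ hs.ne] at this
    simp only [inner_zero_right, add_zero] at this
    linarith
  obtain ⟨M, hM⟩ := (hcomp.image continuous_fst).bddAbove
  set ε := -u / (|M| + 1)
  have hε : 0 < ε := div_pos (by linarith) (by positivity)
  have hεM : ε * (|M| + 1) = -u := div_mul_cancel₀ _ (by positivity)
  refine ⟨(s + ε)⁻¹ • w, fun p hp => ?_⟩
  have hsε : 0 < s + ε := by linarith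
  have hfp : s * p.1 + ⟪w, p.2⟫ < u := hf p ▸ hfu p hp
  have hpM : ε * p.1 ≤ ε * |M| :=
    mul_le_mul_of_nonneg_left ((hM ⟨p, hp, rfl⟩).trans (le_abs_self M)) hε.le
  have hrw : p.1 + ⟪p.2, (s + ε)⁻¹ • w⟫ = (s + ε)⁻¹ * (s * p.1 + ⟪w, p.2⟫ + ε * p.1) := by
    rw [real_inner_smul_right, real_inner_comm]
    field_simp
    ring
  rw [hrw]
  exact mul_neg_of_pos_of_neg (inv_pos.mpr hsε) (by linarith)

theorem maxAffine_nonneg_iff [CompleteSpace E] {C : Set (ℝ × E)} (hne : C.Nonempty)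
    (hconv : Convex ℝ C) (hcomp : IsCompact C) :
    (∀ x, 0 ≤ maxAffine C x) ↔ ∃ a : ℝ, 0 ≤ a ∧ (a, (0 : E)) ∈ C := by
  have hcont (x : E) : Continuous fun p : ℝ × E => p.1 + ⟪p.2, x⟫ :=
    continuous_fst.add (continuous_snd.inner continuous_const)
  constructor
  · intro hpos
    by_contra! hmiss
    have hdisj : Disjoint C (nonnegRay E) := by
      rw [Set.disjoint_left]
      rintro ⟨a, v⟩ hp ⟨ha, rfl⟩
      exact (hmiss a ha hp).elim
    obtain ⟨x, hx⟩ := exists_forall_fst_add_inner_neg hconv hcomp hdisj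
    obtain ⟨p, hp, hmax⟩ := (hcomp.image (hcont x)).sSup_mem (hne.image _)
    exact (hpos x).not_gt (by rw [maxAffine, ← hmax]; exact hx p hp)
  · rintro ⟨a, ha, haC⟩ x
    exact le_csSup_of_le (hcomp.image (hcont x)).bddAbove ⟨_, haC, rfl⟩ (by simpa using ha)

end

theorem stmt_0_general {n : ℕ} {ι : Type*} [Fintype ι]
    (C : ι → Set (ℝ × EuclideanSpace ℝ (Fin n)))
    (hne : ∀ j, (C j).Nonempty) (hconv : ∀ j, Convex ℝ (C j))
    (hcomp : ∀ j, IsCompact (C j))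
    (h : EuclideanSpace ℝ (Fin n) → ℝ)
    (hh : ∀ x, h x = ⨅ j, sSup ((fun p : ℝ × EuclideanSpace ℝ (Fin n) =>
      p.1 + ⟪p.2, x⟫) '' C j)) :
    (∀ x, 0 ≤ h x) ↔
      ∀ j, ∃ a : ℝ, 0 ≤ a ∧ (a, (0 : EuclideanSpace ℝ (Fin n))) ∈ C j := by
  have hinf (x) : 0 ≤ h x ↔ ∀ j, 0 ≤ maxAffine (C j) x := by
    rw [hh x]
    exact ⟨fun hx j => hx.trans (ciInf_le (Set.finite_range _).bddBelow j), Real.iInf_nonneg⟩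
  simp only [hinf]
  rw [forall_comm]
  exact forall_congr' fun j => maxAffine_nonneg_iff (hne j) (hconv j) (hcomp j)

theorem stmt_0 {n : ℕ} {ι : Type*} [Fintype ι] [Nonempty ι]
    (C : ι → Set (ℝ × EuclideanSpace ℝ (Fin n)))
    (hne : ∀ j, (C j).Nonempty) (hconv : ∀ j, Convex ℝ (C j))
    (hcomp : ∀ j, IsCompact (C j))
    (h : EuclideanSpace ℝ (Fin n) → ℝ)
    (hh : ∀ x, h x = ⨅ j, sSup ((fun p : ℝ × EuclideanSpace ℝ (Fin n) =>
      p.1 + ⟪p.2, x⟫) '' C j))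
    (h0 : h 0 = 0) :
    (∀ x, 0 ≤ h x) ↔
      ∀ j, ∃ a : ℝ, 0 ≤ a ∧ (a, (0 : EuclideanSpace ℝ (Fin n))) ∈ C j :=
  stmt_0_general C hne hconv hcomp h hh
end

section
/- Let h(x) = min_{C ∈ E} max_{(a,v) ∈ C} (a + ⟨v,x⟩), where E is a finite nonempty family of nonempty convex compact subsets of ℝ × ℝⁿ. Then h is bounded from below on ℝⁿ if and only if every C ∈ E intersects the line L₀ = {(a, 0ₙ) : a ∈ ℝ}, i.e., every C contains a point whose ℝⁿ-component is zero. -/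
/-!
If some `C j` misses the line `L₀`, its projection `K` to `ℝⁿ` is a compact convex set not
containing `0`, so a separating vector `y` has `⟪v, y⟫ ≤ -1` on `K`; along the ray `t • y` the
`j`-th max of affine functions, hence `h`, tends to `-∞`. Conversely a point `(a j, 0) ∈ C j`
bounds the `j`-th max below by `a j` for every `x`, so `h ≥ min_j a j`.
-/

open scoped RealInnerProductSpace

section MaxAffine

variable {E : Type*} [NormedAddCommGroup E] [InnerProductSpace ℝ E]

theorem le_maxAffine {C : Set (ℝ × E)} (hC : IsCompact C) {p : ℝ × E} (hp : p ∈ C) (x : E) :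
    p.1 + ⟪p.2, x⟫ ≤ maxAffine C x :=
  le_csSup ((hC.image (by fun_prop)).bddAbove) ⟨p, hp, rfl⟩

theorem maxAffine_le {C : Set (ℝ × E)} (hne : C.Nonempty) {x : E} {b : ℝ}
    (hb : ∀ p ∈ C, p.1 + ⟪p.2, x⟫ ≤ b) : maxAffine C x ≤ b :=
  csSup_le (hne.image _) (Set.forall_mem_image.2 hb)

theorem exists_forall_inner_le_neg_one [CompleteSpace E] {K : Set E} (hconv : Convex ℝ K)
    (hclosed : IsClosed K) (h0 : (0 : E) ∉ K) : ∃ y : E, ∀ v ∈ K, ⟪v, y⟫ ≤ -1 := by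
  obtain ⟨f, u, hu, hf⟩ := geometric_hahn_banach_point_closed hconv hclosed h0
  rw [map_zero] at hu
  refine ⟨-u⁻¹ • (InnerProductSpace.toDual ℝ E).symm f, fun v hv => ?_⟩
  rw [real_inner_smul_right, real_inner_comm, InnerProductSpace.toDual_symm_apply, neg_mul,
    neg_le_neg_iff, inv_mul_eq_div, one_le_div hu]
  exact (hf v hv).le

theorem exists_maxAffine_lt [CompleteSpace E] {C : Set (ℝ × E)} (hne : C.Nonempty)
    (hconv : Convex ℝ C) (hcomp : IsCompact C) (hL₀ : ∀ a : ℝ, (a, (0 : E)) ∉ C) (M : ℝ) :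
    ∃ x : E, maxAffine C x < M := by
  have h0 : (0 : E) ∉ Prod.snd '' C := by
    rintro ⟨⟨a, _⟩, ha, rfl⟩
    exact hL₀ a ha
  obtain ⟨y, hy⟩ := exists_forall_inner_le_neg_one
    (hconv.linear_image (LinearMap.snd ℝ ℝ E)) (hcomp.image continuous_snd).isClosed h0
  obtain ⟨A, hA⟩ := (hcomp.image continuous_fst).bddAbove
  set t : ℝ := max 0 (A - M + 1)
  refine ⟨t • y, (maxAffine_le hne fun p hp => ?_).trans_lt (by linarith [le_max_right 0 (A - M + 1)] : A - t < M)⟩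
  have hpA : p.1 ≤ A := hA ⟨p, hp, rfl⟩
  have hpy : t * ⟪p.2, y⟫ ≤ t * -1 :=
    mul_le_mul_of_nonneg_left (hy p.2 ⟨p, hp, rfl⟩) (le_max_left _ _)
  rw [real_inner_smul_right]
  linarith

end MaxAffine

theorem stmt_1 {n : ℕ} {ι : Type*} [Fintype ι] [Nonempty ι]
    (C : ι → Set (ℝ × EuclideanSpace ℝ (Fin n)))
    (hne : ∀ j, (C j).Nonempty) (hconv : ∀ j, Convex ℝ (C j))
    (hcomp : ∀ j, IsCompact (C j))
    (h : EuclideanSpace ℝ (Fin n) → ℝ)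
    (hh : ∀ x, h x = ⨅ j, sSup ((fun p : ℝ × EuclideanSpace ℝ (Fin n) =>
      p.1 + ⟪p.2, x⟫) '' C j)) :
    (∃ M : ℝ, ∀ x, M ≤ h x) ↔
      ∀ j, ∃ a : ℝ, (a, (0 : EuclideanSpace ℝ (Fin n))) ∈ C j := by
  change ∀ x, h x = ⨅ j, maxAffine (C j) x at hh
  constructor
  · rintro ⟨M, hM⟩ j
    by_contra! hL₀
    obtain ⟨x, hx⟩ := exists_maxAffine_lt (hne j) (hconv j) (hcomp j) hL₀ M
    have hhx : h x ≤ maxAffine (C j) x := hh x ▸ ciInf_le (Set.finite_range _).bddBelow j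
    exact (hM x).not_gt (hhx.trans_lt hx)
  · intro hL₀
    choose a ha using hL₀
    refine ⟨⨅ j, a j, fun x => hh x ▸ le_ciInf fun j => ?_⟩
    calc ⨅ i, a i ≤ a j := ciInf_le (Set.finite_range _).bddBelow j
      _ = a j + ⟪(0 : EuclideanSpace ℝ (Fin n)), x⟫ := by rw [inner_zero_left, add_zero]
      _ ≤ maxAffine (C j) x := le_maxAffine (hcomp j) (ha j) x
end

section
/- Let h be a bounded-below piecewise affine function h(x) = min_{C ∈ E} max_{(a,v) ∈ C}(a + ⟨v,x⟩) with E a finite family of convex compact sets each meeting L₀, and let a* = min_{C ∈ E} max{a : (a,0ₙ) ∈ C}. If x* is a global minimizer of h, then h(x*) = min_{C ∈ E*} max_{(a,v) ∈ C}(a + ⟨v,x*⟩), where E* = {C ∈ E : max{a : (a,0ₙ) ∈ C} = a*}. In other words, for every C ∈ E \ E*, max_{(a,v) ∈ C}(a + ⟨v,x*⟩) > a*. -/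
/-!
Write `σ_C(x) = max_{(a,v) ∈ C} (a + ⟨v, x⟩)` and `α(C) = max {a | (a, 0) ∈ C}`. Since `(α(C), 0) ∈ C`,
`σ_C ≥ α(C)` everywhere; conversely, separating a point `(b, 0)` with `b > α(C)` from `C` by a
hyperplane whose normal has positive first coordinate yields an `x` with `σ_C(x) < b`, so
`inf σ_C = α(C)`. Hence `h ≥ a*` and `inf h = a*`, so `h(x*) = a*`. Every `C` with `α(C) > a*` then
has `σ_C(x*) ≥ α(C) > a*`, and the minimum defining `h(x*)` is attained in `E*`.
-/

open scoped RealInnerProductSpace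

lemma bddAbove_slice {E : Type*} [TopologicalSpace E] [Zero E] {C : Set (ℝ × E)}
    (hC : IsCompact C) : BddAbove {a : ℝ | (a, (0 : E)) ∈ C} :=
  (hC.image continuous_fst).bddAbove.mono fun _ ha => Set.mem_image_of_mem Prod.fst ha

section SupportFunction

variable {E : Type*} [NormedAddCommGroup E] [InnerProductSpace ℝ E] {C : Set (ℝ × E)}

lemma le_sSup_affine_image (hC : IsCompact C) (x : E) {p : ℝ × E} (hp : p ∈ C) :
    p.1 + ⟪p.2, x⟫ ≤ sSup ((fun p : ℝ × E => p.1 + ⟪p.2, x⟫) '' C) :=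
  le_csSup (hC.image (continuous_fst.add (continuous_snd.inner continuous_const))).bddAbove
    ⟨p, hp, rfl⟩

lemma sSup_slice_le_sSup_affine_image (hC : IsCompact C) (hslice : ∃ a : ℝ, (a, (0 : E)) ∈ C)
    (x : E) :
    sSup {a : ℝ | (a, (0 : E)) ∈ C} ≤ sSup ((fun p : ℝ × E => p.1 + ⟪p.2, x⟫) '' C) := by
  refine csSup_le hslice fun a ha => ?_
  simpa using le_sSup_affine_image hC x ha

lemma exists_sSup_affine_image_lt [CompleteSpace E] (hconv : Convex ℝ C) (hC : IsCompact C)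
    (hslice : ∃ a : ℝ, (a, (0 : E)) ∈ C) {b : ℝ} (hb : sSup {a : ℝ | (a, (0 : E)) ∈ C} < b) :
    ∃ x : E, sSup ((fun p : ℝ × E => p.1 + ⟪p.2, x⟫) '' C) < b := by
  obtain ⟨a, ha⟩ := hslice
  have hab : a < b := (le_csSup (bddAbove_slice hC) ha).trans_lt hb
  have hbC : (b, (0 : E)) ∉ C := fun hbC => hb.not_ge (le_csSup (bddAbove_slice hC) hbC)
  obtain ⟨f, u, hfC, hfb⟩ := geometric_hahn_banach_closed_point hconv hC.isClosed hbC
  set s := f (1, 0)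
  set y := (InnerProductSpace.toDual ℝ E).symm (f.comp (.inr ℝ ℝ E))
  have hf : ∀ p : ℝ × E, f p = p.1 * s + ⟪y, p.2⟫ := by
    rintro ⟨c, v⟩
    have hcv : ((c, v) : ℝ × E) = c • ((1 : ℝ), (0 : E)) + (0, v) := by simp
    rw [hcv, map_add, map_smul, InnerProductSpace.toDual_symm_apply]
    simp [s]
  have hs : 0 < s := by
    have : a * s < b * s := by simpa [hf] using (hfC _ ha).trans hfb
    nlinarith
  -- Dividing the separating functional by `s` turns it into `p ↦ p.1 + ⟪p.2, s⁻¹ • y⟫`.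
  have hub : ∀ p ∈ C, p.1 + ⟪p.2, s⁻¹ • y⟫ ≤ u / s := by
    intro p hp
    have := hfC p hp
    rw [hf] at this
    rw [real_inner_smul_right, real_inner_comm, le_div_iff₀ hs]
    field_simp
    linarith
  have hu : u / s < b := (div_lt_iff₀ hs).2 (by simpa [hf] using hfb)
  exact ⟨s⁻¹ • y, (csSup_le (Set.Nonempty.image _ ⟨_, ha⟩) (Set.forall_mem_image.2 hub)).trans_lt hu⟩

end SupportFunction

section FiniteInfimum

variable {ι X : Type*} [Finite ι] [Nonempty ι] {g : ι → X → ℝ} {α : ι → ℝ}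

lemma iInf_apply_eq_iInf_at_minimizer (hα : ∀ j x, α j ≤ g j x)
    (happrox : ∀ j b, α j < b → ∃ x, g j x < b) {xs : X}
    (hxs : ∀ x, ⨅ j, g j xs ≤ ⨅ j, g j x) :
    ⨅ j, g j xs = ⨅ j, α j := by
  refine le_antisymm ?_ (ciInf_mono (Set.finite_range α).bddBelow fun j => hα j xs)
  obtain ⟨j₀, hj₀⟩ := exists_eq_ciInf_of_finite (f := α)
  refine le_of_forall_gt_imp_ge_of_dense fun b hb => ?_
  obtain ⟨x, hx⟩ := happrox j₀ b (hj₀ ▸ hb)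
  exact ((hxs x).trans (Finite.ciInf_le _ j₀)).trans hx.le

lemma iInf_eq_iInf_subtype_of_iInf_eq (hα : ∀ j x, α j ≤ g j x) {x : X}
    (hx : ⨅ j, g j x = ⨅ j, α j) :
    ⨅ j, g j x = ⨅ j : {j // α j = ⨅ j, α j}, g j.1 x := by
  obtain ⟨j₁, hj₁⟩ := exists_eq_ciInf_of_finite (f := fun j => g j x)
  have hαj₁ : α j₁ = ⨅ j, α j :=
    le_antisymm (hx ▸ hj₁ ▸ hα j₁ x) (Finite.ciInf_le α j₁)
  have : Nonempty {j // α j = ⨅ j, α j} := ⟨⟨j₁, hαj₁⟩⟩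
  refine le_antisymm (le_ciInf fun j => Finite.ciInf_le _ j.1) ?_
  exact (Finite.ciInf_le (fun j : {j // α j = ⨅ j, α j} => g j.1 x) ⟨j₁, hαj₁⟩).trans_eq hj₁

end FiniteInfimum

theorem stmt_4_general {n : ℕ} {ι : Type*} [Fintype ι] [Nonempty ι]
    (C : ι → Set (ℝ × EuclideanSpace ℝ (Fin n)))
    (hconv : ∀ j, Convex ℝ (C j))
    (hcomp : ∀ j, IsCompact (C j))
    (hL0 : ∀ j, ∃ a : ℝ, (a, (0 : EuclideanSpace ℝ (Fin n))) ∈ C j)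
    (g : ι → EuclideanSpace ℝ (Fin n) → ℝ)
    (hg : ∀ j x, g j x = sSup ((fun p : ℝ × EuclideanSpace ℝ (Fin n) =>
      p.1 + ⟪p.2, x⟫) '' C j))
    (h : EuclideanSpace ℝ (Fin n) → ℝ)
    (hh : ∀ x, h x = ⨅ j, g j x)
    (aStar : ℝ)
    (ha : aStar = ⨅ j, sSup {a : ℝ | (a, (0 : EuclideanSpace ℝ (Fin n))) ∈ C j})
    (xs : EuclideanSpace ℝ (Fin n))
    (hxs : ∀ x, h xs ≤ h x) :
    (∀ j, sSup {a : ℝ | (a, (0 : EuclideanSpace ℝ (Fin n))) ∈ C j} ≠ aStar →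
      aStar < g j xs) ∧
    h xs = ⨅ j : {j : ι //
      sSup {a : ℝ | (a, (0 : EuclideanSpace ℝ (Fin n))) ∈ C j} = aStar},
      g j.1 xs := by
  have hα : ∀ j x, sSup {a : ℝ | (a, (0 : EuclideanSpace ℝ (Fin n))) ∈ C j} ≤ g j x :=
    fun j x => hg j x ▸ sSup_slice_le_sSup_affine_image (hcomp j) (hL0 j) x
  have happrox : ∀ j b, sSup {a : ℝ | (a, (0 : EuclideanSpace ℝ (Fin n))) ∈ C j} < b →
      ∃ x, g j x < b := fun j b hb => by
    simpa only [hg] using exists_sSup_affine_image_lt (hconv j) (hcomp j) (hL0 j) hb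
  have hmin : h xs = aStar := by
    rw [hh, ha]
    exact iInf_apply_eq_iInf_at_minimizer hα happrox fun x => by simpa only [hh] using hxs x
  refine ⟨fun j hj => ?_, ?_⟩
  · exact ((ha ▸ Finite.ciInf_le _ j).lt_of_ne (Ne.symm hj)).trans_le (hα j xs)
  · subst ha
    rw [hh] at hmin ⊢
    exact iInf_eq_iInf_subtype_of_iInf_eq hα hmin

theorem stmt_4 {n : ℕ} {ι : Type*} [Fintype ι] [Nonempty ι]
    (C : ι → Set (ℝ × EuclideanSpace ℝ (Fin n)))
    (hne : ∀ j, (C j).Nonempty) (hconv : ∀ j, Convex ℝ (C j))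
    (hcomp : ∀ j, IsCompact (C j))
    (hL0 : ∀ j, ∃ a : ℝ, (a, (0 : EuclideanSpace ℝ (Fin n))) ∈ C j)
    (g : ι → EuclideanSpace ℝ (Fin n) → ℝ)
    (hg : ∀ j x, g j x = sSup ((fun p : ℝ × EuclideanSpace ℝ (Fin n) =>
      p.1 + ⟪p.2, x⟫) '' C j))
    (h : EuclideanSpace ℝ (Fin n) → ℝ)
    (hh : ∀ x, h x = ⨅ j, g j x)
    (aStar : ℝ)
    (ha : aStar = ⨅ j, sSup {a : ℝ | (a, (0 : EuclideanSpace ℝ (Fin n))) ∈ C j})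
    (xs : EuclideanSpace ℝ (Fin n))
    (hxs : ∀ x, h xs ≤ h x) :
    (∀ j, sSup {a : ℝ | (a, (0 : EuclideanSpace ℝ (Fin n))) ∈ C j} ≠ aStar →
      aStar < g j xs) ∧
    h xs = ⨅ j : {j : ι //
      sSup {a : ℝ | (a, (0 : EuclideanSpace ℝ (Fin n))) ∈ C j} = aStar},
      g j.1 xs :=
  stmt_4_general C hconv hcomp hL0 g hg h hh aStar ha xs hxs
end

section
/- Let h(x) = min_{C ∈ E} max_{(a,v) ∈ C}(a + ⟨v,x⟩), where E is a finite family of convex polytopes C = conv{(a_i, v_i) : i ∈ I_C} each meeting L₀, and a* = min_{C ∈ E} max{a : (a,0ₙ) ∈ C}. Then x* is a global minimizer of h if and only if x* ∈ ⋃_{C ∈ E*} X(C), where E* = {C ∈ E : max{a : (a,0ₙ) ∈ C} = a*} and X(C) = {x : a_i + ⟨v_i, x⟩ ≤ a* for all i ∈ I_C}. -/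
/-!
Each polytope `C` gives the convex function `x ↦ max_{(a,v) ∈ C} (a + ⟪v, x⟫)`, which is bounded
below by the height `max {b | (b, 0) ∈ C}` of `C` on the axis `ℝ × {0}`. That bound is sharp:
a point `(c, 0)` above `C` is strictly separated from `C` by a hyperplane, which cannot be vertical
since it also separates it from the points of `C` on the axis below it; normalising the functional
to `(b, w) ↦ b + ⟪w, x⟫` yields an `x` at which the maximum is below `c`. Hence `inf h = a*`, so
`x*` minimises `h` exactly when one of the maxima is at most `a*` at `x*`, which forces the
corresponding polytope into `E*`.
-/

open scoped RealInnerProductSpace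

section

variable {E : Type*} [NormedAddCommGroup E] [InnerProductSpace ℝ E]

noncomputable def affineMax (K : Set (ℝ × E)) (x : E) : ℝ :=
  sSup ((fun p : ℝ × E => p.1 + ⟪p.2, x⟫) '' K)

noncomputable def axisMax (K : Set (ℝ × E)) : ℝ :=
  sSup {b : ℝ | (b, (0 : E)) ∈ K}

theorem le_affineMax {K : Set (ℝ × E)} (hK : IsCompact K) {p : ℝ × E} (hp : p ∈ K) (x : E) :
    p.1 + ⟪p.2, x⟫ ≤ affineMax K x :=
  le_csSup (hK.image (continuous_fst.add (continuous_snd.inner continuous_const))).bddAbove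
    ⟨p, hp, rfl⟩

theorem affineMax_convexHull_le {S : Set (ℝ × E)} (hS : S.Nonempty) {x : E} {c : ℝ}
    (h : ∀ p ∈ S, p.1 + ⟪p.2, x⟫ ≤ c) : affineMax (convexHull ℝ S) x ≤ c := by
  have hlin : IsLinearMap ℝ fun p : ℝ × E => p.1 + ⟪p.2, x⟫ :=
    ⟨fun p q => by simp only [Prod.fst_add, Prod.snd_add, inner_add_left]; ring,
     fun r p => by simp only [Prod.smul_fst, Prod.smul_snd, smul_eq_mul, real_inner_smul_left]; ring⟩
  refine csSup_le ((convexHull_nonempty_iff.2 hS).image _) ?_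
  rintro _ ⟨p, hp, rfl⟩
  exact convexHull_min h (convex_halfSpace_le hlin c) hp

theorem bddAbove_axis {K : Set (ℝ × E)} (hK : IsCompact K) : BddAbove {b : ℝ | (b, (0 : E)) ∈ K} :=
  ⟨affineMax K 0, fun b hb => by simpa using le_affineMax hK hb 0⟩

theorem axisMax_le_affineMax {K : Set (ℝ × E)} (hK : IsCompact K) (hK₀ : ∃ b, (b, (0 : E)) ∈ K)
    (x : E) : axisMax K ≤ affineMax K x :=
  csSup_le hK₀ fun b hb => by simpa using le_affineMax hK hb x

theorem ContinuousLinearMap.exists_apply_eq_fst_mul_add_inner [CompleteSpace E]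
    (φ : ℝ × E →L[ℝ] ℝ) : ∃ (s : ℝ) (y : E), ∀ p : ℝ × E, φ p = p.1 * s + ⟪p.2, y⟫ := by
  refine ⟨φ (1, 0), (InnerProductSpace.toDual ℝ E).symm (φ.comp (.inr ℝ ℝ E)), fun p => ?_⟩
  rw [real_inner_comm, InnerProductSpace.toDual_symm_apply, ← φ.comp_inl_add_comp_inr p]
  congr 1
  rw [ContinuousLinearMap.comp_apply, ContinuousLinearMap.inl_apply, ← smul_eq_mul, ← map_smul,
    Prod.smul_mk, smul_zero, smul_eq_mul, mul_one]

theorem exists_forall_fst_add_inner_lt_of_notMem [CompleteSpace E] {K : Set (ℝ × E)} (hconv : Convex ℝ K)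
    (hclosed : IsClosed K) {b c : ℝ} (hb : (b, (0 : E)) ∈ K) (hbc : b < c) (hc : (c, (0 : E)) ∉ K) :
    ∃ x : E, ∀ p ∈ K, p.1 + ⟪p.2, x⟫ < c := by
  obtain ⟨φ, u, hφK, hφc⟩ := geometric_hahn_banach_closed_point hconv hclosed hc
  obtain ⟨s, y, hφ⟩ := φ.exists_apply_eq_fst_mul_add_inner
  have hbu := hφK _ hb
  simp only [hφ, inner_zero_left, add_zero] at hbu hφc
  have hs : 0 < s := pos_of_mul_pos_right (a := c - b) (by linarith [sub_mul c b s]) (by linarith)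
  refine ⟨s⁻¹ • y, fun p hp => ?_⟩
  have hpu := hφK p hp
  rw [hφ] at hpu
  rw [real_inner_smul_right, ← mul_lt_mul_iff_of_pos_right hs]
  field_simp
  linarith

theorem exists_affineMax_le [CompleteSpace E] {K : Set (ℝ × E)} (hK : IsCompact K)
    (hconv : Convex ℝ K) (hK₀ : ∃ b, (b, (0 : E)) ∈ K) {c : ℝ} (hc : axisMax K < c) :
    ∃ x : E, affineMax K x ≤ c := by
  obtain ⟨b, hb⟩ := hK₀
  have hbc : b < c := (le_csSup (bddAbove_axis hK) hb).trans_lt hc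
  have hcK : (c, (0 : E)) ∉ K := fun h => hc.not_ge (le_csSup (bddAbove_axis hK) h)
  obtain ⟨x, hx⟩ := exists_forall_fst_add_inner_lt_of_notMem hconv hK.isClosed hb hbc hcK
  exact ⟨x, csSup_le ⟨_, _, hb, rfl⟩ fun _ ⟨p, hp, hpx⟩ => hpx ▸ (hx p hp).le⟩

end

theorem stmt_6_general {n : ℕ} {J : Type*} [Fintype J] [Nonempty J]
    (I : J → Type*) [∀ j, Fintype (I j)]
    (a : (j : J) → I j → ℝ) (v : (j : J) → I j → EuclideanSpace ℝ (Fin n))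
    (C : J → Set (ℝ × EuclideanSpace ℝ (Fin n)))
    (hC : ∀ j, C j = convexHull ℝ (Set.range fun i : I j => (a j i, v j i)))
    (hL0 : ∀ j, ∃ b : ℝ, (b, (0 : EuclideanSpace ℝ (Fin n))) ∈ C j)
    (h : EuclideanSpace ℝ (Fin n) → ℝ)
    (hh : ∀ x, h x = ⨅ j, sSup ((fun p : ℝ × EuclideanSpace ℝ (Fin n) =>
      p.1 + ⟪p.2, x⟫) '' C j))
    (aStar : ℝ)
    (ha : aStar = ⨅ j, sSup {b : ℝ | (b, (0 : EuclideanSpace ℝ (Fin n))) ∈ C j})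
    (xs : EuclideanSpace ℝ (Fin n)) :
    (∀ x, h xs ≤ h x) ↔
      ∃ j : J, sSup {b : ℝ | (b, (0 : EuclideanSpace ℝ (Fin n))) ∈ C j} = aStar ∧
        ∀ i : I j, a j i + ⟪v j i, xs⟫ ≤ aStar := by
  change ∀ x, h x = ⨅ j, affineMax (C j) x at hh
  change aStar = ⨅ j, axisMax (C j) at ha
  change (∀ x, h xs ≤ h x) ↔ ∃ j, axisMax (C j) = aStar ∧ _
  have hK j : IsCompact (C j) := hC j ▸ (Set.finite_range _).isCompact_convexHull ℝ
  have hconv j : Convex ℝ (C j) := hC j ▸ convex_convexHull ℝ _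
  have hvert j i : (a j i, v j i) ∈ C j := hC j ▸ subset_convexHull ℝ _ ⟨i, rfl⟩
  have aStar_le j : aStar ≤ axisMax (C j) := ha ▸ ciInf_le (Set.finite_range _).bddBelow j
  have h_le j x : h x ≤ affineMax (C j) x := hh x ▸ ciInf_le (Set.finite_range _).bddBelow j
  have aStar_le_h x : aStar ≤ h x :=
    hh x ▸ le_ciInf fun j => (aStar_le j).trans (axisMax_le_affineMax (hK j) (hL0 j) x)
  constructor
  · intro hmin
    obtain ⟨j₀, hj₀⟩ := exists_eq_ciInf_of_finite (f := fun j => axisMax (C j))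
    have hxs : h xs ≤ aStar := le_of_forall_gt_imp_ge_of_dense fun c hc => by
      obtain ⟨x, hx⟩ := exists_affineMax_le (hK j₀) (hconv j₀) (hL0 j₀)
        (c := c) (by rwa [hj₀, ← ha])
      exact (hmin x).trans ((h_le j₀ x).trans hx)
    obtain ⟨j₁, hj₁⟩ := exists_eq_ciInf_of_finite (f := fun j => affineMax (C j) xs)
    have hj₁xs : affineMax (C j₁) xs ≤ aStar := by rw [hj₁, ← hh xs]; exact hxs
    refine ⟨j₁, le_antisymm ((axisMax_le_affineMax (hK j₁) (hL0 j₁) xs).trans hj₁xs)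
      (aStar_le j₁), fun i => ?_⟩
    exact (le_affineMax (hK j₁) (hvert j₁ i) xs).trans hj₁xs
  · rintro ⟨j, -, hj⟩ x
    have hne : (Set.range fun i : I j => (a j i, v j i)).Nonempty := by
      obtain ⟨b, hb⟩ := hL0 j
      rw [← convexHull_nonempty_iff (𝕜 := ℝ), ← hC j]
      exact ⟨_, hb⟩
    calc h xs ≤ affineMax (C j) xs := h_le j xs
      _ ≤ aStar := hC j ▸ affineMax_convexHull_le hne (by rintro _ ⟨i, rfl⟩; exact hj i)
      _ ≤ h x := aStar_le_h x

theorem stmt_6 {n : ℕ} {J : Type*} [Fintype J] [Nonempty J]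
    (I : J → Type*) [∀ j, Fintype (I j)] [∀ j, Nonempty (I j)]
    (a : (j : J) → I j → ℝ) (v : (j : J) → I j → EuclideanSpace ℝ (Fin n))
    (C : J → Set (ℝ × EuclideanSpace ℝ (Fin n)))
    (hC : ∀ j, C j = convexHull ℝ (Set.range fun i : I j => (a j i, v j i)))
    (hL0 : ∀ j, ∃ b : ℝ, (b, (0 : EuclideanSpace ℝ (Fin n))) ∈ C j)
    (h : EuclideanSpace ℝ (Fin n) → ℝ)
    (hh : ∀ x, h x = ⨅ j, sSup ((fun p : ℝ × EuclideanSpace ℝ (Fin n) =>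
      p.1 + ⟪p.2, x⟫) '' C j))
    (aStar : ℝ)
    (ha : aStar = ⨅ j, sSup {b : ℝ | (b, (0 : EuclideanSpace ℝ (Fin n))) ∈ C j})
    (xs : EuclideanSpace ℝ (Fin n)) :
    (∀ x, h xs ≤ h x) ↔
      ∃ j : J, sSup {b : ℝ | (b, (0 : EuclideanSpace ℝ (Fin n))) ∈ C j} = aStar ∧
        ∀ i : I j, a j i + ⟪v j i, xs⟫ ≤ aStar :=
  stmt_6_general I a v C hC hL0 h hh aStar ha xs
end

section
/- In the setting of a bounded-below piecewise affine function h(x) = min_{C ∈ E} max_{(a,v) ∈ C}(a + ⟨v,x⟩) with minimum value a*, if there exists a polytope C* = conv{(a_i, v_i) : i ∈ I} in E with max{a : (a,0ₙ) ∈ C*} = a* such that a_i ≤ a* for all i ∈ I, then h(0ₙ) = a*, i.e., the origin is a global minimizer of h. -/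
/-!
Each `C ∈ E` meets the axis `L₀` in points `(b, 0)` with `b` up to at least `a*`, and such
a point contributes `b` to the maximum defining the piece of `C` at any `x`; hence
`a* ≤ h x`. On the other hand all vertices of `C*` lie in the closed half-space `{a ≤ a*}`,
hence so does `C*`, and the piece of `C*` at the origin is `max {a : (a, v) ∈ C*} ≤ a*`.
-/

open scoped RealInnerProductSpace

section AffinePieces

variable {E : Type*} [NormedAddCommGroup E] [InnerProductSpace ℝ E]

lemma sSup_section_zero_le_sSup_affine {C : Set (ℝ × E)} (hC : IsCompact C)
    (hC₀ : ∃ b : ℝ, (b, (0 : E)) ∈ C) (x : E) :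
    sSup {b : ℝ | (b, (0 : E)) ∈ C} ≤ sSup ((fun p : ℝ × E => p.1 + ⟪p.2, x⟫) '' C) := by
  have hbdd : BddAbove ((fun p : ℝ × E => p.1 + ⟪p.2, x⟫) '' C) :=
    (hC.image (continuous_fst.add (continuous_snd.inner continuous_const))).bddAbove
  refine csSup_le_csSup hbdd hC₀ ?_
  rintro b hb
  exact ⟨(b, 0), hb, by simp⟩

lemma sSup_affine_zero_le {C : Set (ℝ × E)} (hC : C.Nonempty) {c : ℝ}
    (hle : ∀ p ∈ C, p.1 ≤ c) :
    sSup ((fun p : ℝ × E => p.1 + ⟪p.2, (0 : E)⟫) '' C) ≤ c := by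
  refine csSup_le (hC.image _) ?_
  rintro _ ⟨p, hp, rfl⟩
  simpa using hle p hp

lemma fst_le_of_mem_convexHull_range {ι : Type*} {f : ι → ℝ × E} {c : ℝ}
    (hf : ∀ i, (f i).1 ≤ c) {p : ℝ × E} (hp : p ∈ convexHull ℝ (Set.range f)) : p.1 ≤ c := by
  refine convexHull_min ?_ (convex_halfSpace_le (LinearMap.fst ℝ ℝ E).isLinear c) hp
  rintro _ ⟨i, rfl⟩
  exact hf i

end AffinePieces

theorem stmt_7_general {n : ℕ} {J : Type*} [Fintype J]
    (I : J → Type*) [∀ j, Fintype (I j)]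
    (a : (j : J) → I j → ℝ) (v : (j : J) → I j → EuclideanSpace ℝ (Fin n))
    (C : J → Set (ℝ × EuclideanSpace ℝ (Fin n)))
    (hC : ∀ j, C j = convexHull ℝ (Set.range fun i : I j => (a j i, v j i)))
    (hL0 : ∀ j, ∃ b : ℝ, (b, (0 : EuclideanSpace ℝ (Fin n))) ∈ C j)
    (h : EuclideanSpace ℝ (Fin n) → ℝ)
    (hh : ∀ x, h x = ⨅ j, sSup ((fun p : ℝ × EuclideanSpace ℝ (Fin n) =>
      p.1 + ⟪p.2, x⟫) '' C j))
    (aStar : ℝ)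
    (ha : aStar = ⨅ j, sSup {b : ℝ | (b, (0 : EuclideanSpace ℝ (Fin n))) ∈ C j})
    (js : J)
    (hle : ∀ i : I js, a js i ≤ aStar) :
    h 0 = aStar ∧ ∀ x, h 0 ≤ h x := by
  have hcompact : ∀ j, IsCompact (C j) := fun j =>
    hC j ▸ (Set.finite_range _).isCompact_convexHull ℝ
  have lower : ∀ x, aStar ≤ h x := fun x => by
    rw [hh, ha]
    exact ciInf_mono (Set.finite_range _).bddBelow fun j =>
      sSup_section_zero_le_sSup_affine (hcompact j) (hL0 j) x
  have upper : h 0 ≤ aStar := by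
    obtain ⟨b, hb⟩ := hL0 js
    rw [hh]
    refine ciInf_le_of_le (Set.finite_range _).bddBelow js (sSup_affine_zero_le ⟨_, hb⟩ ?_)
    intro p hp
    exact fst_le_of_mem_convexHull_range hle (hC js ▸ hp)
  have h0 : h 0 = aStar := le_antisymm upper (lower 0)
  exact ⟨h0, fun x => h0 ▸ lower x⟩

theorem stmt_7 {n : ℕ} {J : Type*} [Fintype J] [Nonempty J]
    (I : J → Type*) [∀ j, Fintype (I j)] [∀ j, Nonempty (I j)]
    (a : (j : J) → I j → ℝ) (v : (j : J) → I j → EuclideanSpace ℝ (Fin n))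
    (C : J → Set (ℝ × EuclideanSpace ℝ (Fin n)))
    (hC : ∀ j, C j = convexHull ℝ (Set.range fun i : I j => (a j i, v j i)))
    (hL0 : ∀ j, ∃ b : ℝ, (b, (0 : EuclideanSpace ℝ (Fin n))) ∈ C j)
    (h : EuclideanSpace ℝ (Fin n) → ℝ)
    (hh : ∀ x, h x = ⨅ j, sSup ((fun p : ℝ × EuclideanSpace ℝ (Fin n) =>
      p.1 + ⟪p.2, x⟫) '' C j))
    (aStar : ℝ)
    (ha : aStar = ⨅ j, sSup {b : ℝ | (b, (0 : EuclideanSpace ℝ (Fin n))) ∈ C j})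
    (js : J)
    (hjs : sSup {b : ℝ | (b, (0 : EuclideanSpace ℝ (Fin n))) ∈ C js} = aStar)
    (hle : ∀ i : I js, a js i ≤ aStar) :
    h 0 = aStar ∧ ∀ x, h 0 ≤ h x :=
  stmt_7_general I a v C hC hL0 h hh aStar ha js hle
end

section
/- The function h₃(x₁, x₂) = min{max{-x₁, x₁, -x₂, x₂}, max{2x₁ - 3, -2x₁ + 5, x₂ - 1, -x₂ + 3}} on ℝ² has global minimum value 0, attained uniquely at the origin. -/
/-! The first max is `max |x₁| |x₂|`, which is nonnegative and vanishes only at the origin; the second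
max is at least `1` everywhere, because `2x₁ - 3` and `-2x₁ + 5` average to `1`. Hence `h₃` is the
minimum of a function vanishing only at the origin and a function bounded below by `1`. -/

lemma max_neg_self_eq_abs {α : Type*} [AddGroup α] [LinearOrder α] (a : α) : max (-a) a = |a| := by
  rw [abs_eq_max_neg, max_comm]

lemma max_abs_eq_zero_iff {α : Type*} [AddCommGroup α] [LinearOrder α] [IsOrderedAddMonoid α]
    (a b : α) : max |a| |b| = 0 ↔ a = 0 ∧ b = 0 := by
  constructor
  · intro h
    exact ⟨abs_eq_zero.1 (le_antisymm (h ▸ le_max_left _ _) (abs_nonneg a)),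
      abs_eq_zero.1 (le_antisymm (h ▸ le_max_right _ _) (abs_nonneg b))⟩
  · rintro ⟨rfl, rfl⟩
    simp

lemma eq_zero_of_min_eq_zero_of_pos {α : Type*} [LinearOrder α] [Zero α] {a b : α} (hb : 0 < b)
    (h : min a b = 0) : a = 0 := by
  rcases min_choice a b with hab | hab
  · rwa [hab] at h
  · exact absurd (hab ▸ h) hb.ne'

lemma one_le_max_two_mul_sub_three (x : ℝ) : 1 ≤ max (2 * x - 3) (-2 * x + 5) :=
  le_max_iff.2 (by by_contra! h; linarith [h.1, h.2])

theorem stmt_13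
    (h₃ : ℝ → ℝ → ℝ)
    (hdef : ∀ x₁ x₂, h₃ x₁ x₂ =
      min (max (max (-x₁) x₁) (max (-x₂) x₂))
        (max (max (2 * x₁ - 3) (-2 * x₁ + 5)) (max (x₂ - 1) (-x₂ + 3)))) :
    (∀ x₁ x₂, 0 ≤ h₃ x₁ x₂) ∧ h₃ 0 0 = 0 ∧
      ∀ x₁ x₂, h₃ x₁ x₂ = 0 → x₁ = 0 ∧ x₂ = 0 := by
  have hfar (x₁ x₂ : ℝ) :
      1 ≤ max (max (2 * x₁ - 3) (-2 * x₁ + 5)) (max (x₂ - 1) (-x₂ + 3)) :=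
    le_max_of_le_left (one_le_max_two_mul_sub_three x₁)
  simp only [hdef, max_neg_self_eq_abs]
  refine ⟨fun x₁ x₂ => le_min (by positivity) (zero_le_one.trans (hfar x₁ x₂)), by norm_num,
    fun x₁ x₂ h => ?_⟩
  exact (max_abs_eq_zero_iff x₁ x₂).1
    (eq_zero_of_min_eq_zero_of_pos (zero_lt_one.trans_le (hfar x₁ x₂)) h)
end
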